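/- arXiv:2311.07364 — 7 statements merged into one kernel-verified Lean document; each statement's English description precedes it below -/
import Mathlib

section
/- Let N be a connected nilpotent Lie group modeled on a finite-dimensional real normed space E, and let ψ be a smooth automorphism of N such that the only vector v ∈ E with (dψ)_e v = v is v = 0. Then the map f_ψ : N → N defined by f_ψ(x) := x · ψ(x⁻¹) is injective if and only if fix(ψ) = {e}, where e is the identity element of N. -/
open Manifold

/-- Under the hypotheses of Statement 0, the map `f_ψ (x) := x * ψ x⁻¹` is
injective if and only if the fixed-point set of `ψ` is `{e}`. -/
theorem stmt_1
    {E : Type*} [NormedAddCommGroup E] [NormedSpace ℝ E] [FiniteDimensional ℝ E]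
    {N : Type*} [TopologicalSpace N] [ChartedSpace E N] [Group N]
    [LieGroup 𝓘(ℝ, E) (⊤ : ℕ∞) N] [ConnectedSpace N] [Group.IsNilpotent N]
    (ψ : N ≃* N)
    (hψ : ContMDiff 𝓘(ℝ, E) 𝓘(ℝ, E) (⊤ : ℕ∞) ψ)
    (hψinv : ContMDiff 𝓘(ℝ, E) 𝓘(ℝ, E) (⊤ : ℕ∞) ψ.symm)
    (hfix : ∀ v : E, mfderiv 𝓘(ℝ, E) 𝓘(ℝ, E) ψ 1 v = v → v = 0) :
    Function.Injective (fun x : N => x * ψ x⁻¹) ↔ {x : N | ψ x = x} = {1} := by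
  constructor
  · intro hinj
    ext x
    simp only [Set.mem_setOf_eq, Set.mem_singleton_iff]
    constructor
    · intro hx
      have : x * ψ x⁻¹ = (1 : N) * ψ (1 : N)⁻¹ := by
        simp [map_inv, hx]
      exact hinj this
    · rintro rfl; simp
  · intro h x y hxy
    simp only [map_inv] at hxy
    have h2 : (ψ y)⁻¹ * ψ x = y⁻¹ * x := by
      calc (ψ y)⁻¹ * ψ x = y⁻¹ * (y * (ψ y)⁻¹) * ψ x := by group
        _ = y⁻¹ * (x * (ψ x)⁻¹) * ψ x := by rw [← hxy]
        _ = y⁻¹ * x := by group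
    have key : ψ (y⁻¹ * x) = y⁻¹ * x := by rw [map_mul, map_inv, h2]
    have h1 : y⁻¹ * x ∈ ({1} : Set N) := by rw [← h]; exact key
    exact (inv_mul_eq_one.mp h1).symm
end

section
/- Fix σ ∈ ℝ and define F : ℝ³ → ℝ by F(x, y, z) := 6zσ + y(y² − 2xσ). For all real numbers u, x₀, y₀, z₀, let γ(S) = (x₀ + y₀S + uS²/2, y₀ + uS, z₀ + (1/6)(2x₀u − y₀²)S). Then for every S ∈ ℝ, the function S ↦ F(γ(S)) is differentiable with derivative d/dS F(γ(S)) = 3(u − σ)(y₀ + uS)². -/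
/-- Fix `σ` and let `F(x, y, z) := 6zσ + y(y² − 2xσ)`.  Along the solution
`γ(S) = (x₀ + y₀ S + u S²/2, y₀ + u S, z₀ + (1/6)(2x₀u − y₀²)S)` of the system with constant
control `u`, the function `S ↦ F(γ(S))` has derivative `3(u − σ)(y₀ + uS)²`. -/
theorem stmt_9 (σ u x₀ y₀ z₀ : ℝ) :
    ∀ S : ℝ,
      HasDerivAt
        (fun S : ℝ =>
          6 * (z₀ + (1 / 6) * (2 * x₀ * u - y₀ ^ 2) * S) * σ +
            (y₀ + u * S) *
              ((y₀ + u * S) ^ 2 - 2 * (x₀ + y₀ * S + u * S ^ 2 / 2) * σ))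
        (3 * (u - σ) * (y₀ + u * S) ^ 2) S := by
  intro S
  have hid : HasDerivAt (fun S : ℝ => S) 1 S := hasDerivAt_id S
  have h1 : HasDerivAt (fun S : ℝ => y₀ + u * S) u S := by
    refine ((hasDerivAt_const S y₀).add ((hasDerivAt_const S u).mul hid)).congr_deriv ?_
    simp
  have h2 : HasDerivAt (fun S : ℝ => x₀ + y₀ * S + u * S ^ 2 / 2)
      (y₀ + u * S) S := by
    have := ((hasDerivAt_const S x₀).add ((hasDerivAt_const S y₀).mul hid)).add
      (((hasDerivAt_const S u).mul (hid.pow 2)).div_const 2)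
    refine this.congr_deriv ?_
    ring
  have h3 : HasDerivAt (fun S : ℝ => 6 * (z₀ + (1 / 6) * (2 * x₀ * u - y₀ ^ 2) * S) * σ)
      (6 * ((1 / 6) * (2 * x₀ * u - y₀ ^ 2)) * σ) S := by
    have := (((hasDerivAt_const S z₀).add
      ((hasDerivAt_const S ((1 / 6 : ℝ) * (2 * x₀ * u - y₀ ^ 2))).mul hid)).const_mul
      (6 : ℝ)).mul_const σ
    refine this.congr_deriv ?_
    ring
  have h4 : HasDerivAt (fun S : ℝ => (y₀ + u * S) *
      ((y₀ + u * S) ^ 2 - 2 * (x₀ + y₀ * S + u * S ^ 2 / 2) * σ))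
      (u * ((y₀ + u * S) ^ 2 - 2 * (x₀ + y₀ * S + u * S ^ 2 / 2) * σ) +
        (y₀ + u * S) * (2 * (y₀ + u * S) * u - 2 * (y₀ + u * S) * σ)) S := by
    have := h1.mul ((h1.pow 2).sub ((h2.const_mul (2 : ℝ)).mul_const σ))
    refine this.congr_deriv ?_
    simp only [Pi.sub_apply, Pi.pow_apply]
    ring
  have := h3.add h4
  refine this.congr_deriv ?_
  ring
end

section
/- Fix σ ∈ ℝ and define F : ℝ³ → ℝ by F(x, y, z) := 6zσ + y(y² − 2xσ). Let u : ℝ → ℝ satisfy u(t) ≥ σ for all t, and let x, y, z : ℝ → ℝ be differentiable functions satisfying, for all t ∈ ℝ, x'(t) = y(t), y'(t) = u(t), z'(t) = (1/6)(2x(t)u(t) − y(t)²). Then the function t ↦ F(x(t), y(t), z(t)) is monotone nondecreasing on ℝ. -/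
/-- Fix `σ` and let `F(x, y, z) := 6zσ + y(y² − 2xσ)`.  If `u ≥ σ`
everywhere and `x, y, z` solve `x' = y`, `y' = u`, `z' = (1/6)(2xu − y²)` on `ℝ`, then
`t ↦ F(x t, y t, z t)` is monotone nondecreasing. -/
theorem stmt_10 (σ : ℝ) (u x y z : ℝ → ℝ)
    (hu : ∀ t, u t ≥ σ)
    (hx : ∀ t, HasDerivAt x (y t) t)
    (hy : ∀ t, HasDerivAt y (u t) t)
    (hz : ∀ t, HasDerivAt z ((1 / 6) * (2 * x t * u t - (y t) ^ 2)) t) :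
    Monotone (fun t => 6 * z t * σ + y t * ((y t) ^ 2 - 2 * x t * σ)) := by
  have hF : ∀ t, HasDerivAt (fun t => 6 * z t * σ + y t * ((y t) ^ 2 - 2 * x t * σ))
      (3 * (y t) ^ 2 * (u t - σ)) t := by
    intro t
    have h := ((((hz t).const_mul 6).mul_const σ).add
      ((hy t).mul (((hy t).pow 2).sub (((hx t).const_mul 2).mul_const σ))))
    convert h using 1
    · rfl
    · rfl
    · funext s; simp only [Pi.add_apply, Pi.mul_apply, Pi.sub_apply, Pi.pow_apply]
    · simp only [Pi.mul_apply, Pi.sub_apply, Pi.pow_apply]; norm_num; ring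
  have hdiff : Differentiable ℝ (fun t => 6 * z t * σ + y t * ((y t) ^ 2 - 2 * x t * σ)) :=
    fun t => (hF t).differentiableAt
  apply monotone_of_deriv_nonneg hdiff
  intro t
  rw [(hF t).deriv]
  have := hu t
  nlinarith [sq_nonneg (y t)]
end

section
/- Fix real numbers σ < ρ and define F : ℝ³ → ℝ by F(x, y, z) := 6zσ + y(y² − 2xσ). Let u : ℝ → ℝ satisfy u(t) ≥ ρ for all t, and let x, y, z : ℝ → ℝ be differentiable functions satisfying, for all t ∈ ℝ, x'(t) = y(t), y'(t) = u(t), z'(t) = (1/6)(2x(t)u(t) − y(t)²). If y(0) ≠ 0, then F(x(S), y(S), z(S)) > F(x(0), y(0), z(0)) for every S > 0. -/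
/-- Fix `σ < ρ` and let `F(x, y, z) := 6zσ + y(y² − 2xσ)`.  If `u ≥ ρ`
everywhere, `x, y, z` solve `x' = y`, `y' = u`, `z' = (1/6)(2xu − y²)` on `ℝ`, and
`y 0 ≠ 0`, then `F(x S, y S, z S) > F(x 0, y 0, z 0)` for every `S > 0`. -/
theorem stmt_11 (σ ρ : ℝ) (hσρ : σ < ρ) (u x y z : ℝ → ℝ)
    (hu : ∀ t, u t ≥ ρ)
    (hx : ∀ t, HasDerivAt x (y t) t)
    (hy : ∀ t, HasDerivAt y (u t) t)
    (hz : ∀ t, HasDerivAt z ((1 / 6) * (2 * x t * u t - (y t) ^ 2)) t)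
    (hy0 : y 0 ≠ 0) :
    ∀ S : ℝ, 0 < S →
      6 * z S * σ + y S * ((y S) ^ 2 - 2 * x S * σ) >
        6 * z 0 * σ + y 0 * ((y 0) ^ 2 - 2 * x 0 * σ) := by
  intro S hS
  set g : ℝ → ℝ := fun t => 6 * z t * σ + y t * ((y t) ^ 2 - 2 * x t * σ) with hgdef
  have hg : ∀ t, HasDerivAt g (3 * (y t) ^ 2 * (u t - σ)) t := by
    intro t
    have h1 : HasDerivAt (fun s => 6 * z s * σ)
        (6 * ((1 / 6) * (2 * x t * u t - (y t) ^ 2)) * σ) t :=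
      ((hz t).const_mul 6).mul_const σ
    have h2 : HasDerivAt (fun s => (y s) ^ 2 - 2 * x s * σ)
        ((2 : ℕ) * (y t) ^ 1 * u t - 2 * y t * σ) t :=
      ((hy t).pow 2).sub (((hx t).const_mul 2).mul_const σ)
    have h3 := (hy t).fun_mul h2
    have h4 := h1.add h3
    refine h4.congr_deriv ?_
    push_cast
    ring
  -- derivative is nonneg everywhere
  have hnn : ∀ t, 0 ≤ 3 * (y t) ^ 2 * (u t - σ) := by
    intro t
    have : (0:ℝ) ≤ u t - σ := by linarith [hu t]
    positivity
  have hcont : Continuous g := continuous_iff_continuousAt.mpr fun t => (hg t).differentiableAt.continuousAt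
  -- find δ where y ≠ 0 near 0
  have hev : ∀ᶠ t in nhds (0:ℝ), y t ≠ 0 := ((hy 0).continuousAt).eventually_ne hy0
  obtain ⟨δ, hδpos, hδ⟩ := Metric.eventually_nhds_iff.mp hev
  set t0 : ℝ := min S (δ / 2) with ht0def
  have ht0pos : 0 < t0 := lt_min hS (by linarith)
  have ht0S : t0 ≤ S := min_le_left _ _
  have hderiv : ∀ t, deriv g t = 3 * (y t) ^ 2 * (u t - σ) := fun t => (hg t).deriv
  -- strict mono on [0, t0]
  have hstrict : StrictMonoOn g (Set.Icc 0 t0) := by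
    apply StrictMonoOn.mono (s := Set.Icc 0 t0)
    · exact strictMonoOn_of_deriv_pos (convex_Icc 0 t0) (hcont.continuousOn)
        (fun t ht => by
          rw [interior_Icc] at ht
          rw [hderiv]
          have hyt : y t ≠ 0 := by
            apply hδ
            rw [Real.dist_eq, sub_zero, abs_of_pos ht.1]
            calc t < t0 := ht.2
              _ ≤ δ / 2 := min_le_right _ _
              _ < δ := by linarith
          have h1 : 0 < (y t) ^ 2 := by positivity
          have h2 : 0 < u t - σ := by linarith [hu t]
          positivity)
    · exact le_refl _
  have hmono : MonotoneOn g (Set.Icc t0 S) :=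
    monotoneOn_of_deriv_nonneg (convex_Icc t0 S) hcont.continuousOn
      (fun t _ => (hg t).differentiableAt.differentiableWithinAt)
      (fun t _ => by rw [hderiv]; exact hnn t)
  have h1 : g 0 < g t0 := hstrict ⟨le_refl 0, le_of_lt ht0pos⟩ ⟨le_of_lt ht0pos, le_refl _⟩ ht0pos
  have h2 : g t0 ≤ g S := hmono ⟨le_refl _, ht0S⟩ ⟨ht0S, le_refl _⟩ ht0S
  calc 6 * z 0 * σ + y 0 * ((y 0) ^ 2 - 2 * x 0 * σ) = g 0 := rfl
    _ < g t0 := h1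
    _ ≤ g S := h2
    _ = _ := rfl
end

section
/- Fix σ ∈ ℝ. Let u : ℝ → ℝ satisfy u(t) ≥ σ for all t, and let x, y, z : ℝ → ℝ be differentiable functions satisfying, for all t ∈ ℝ, x'(t) = y(t), y'(t) = u(t), z'(t) = (1/2)x(t)u(t). Then the function t ↦ 6σ(z(t) − (1/6)x(t)y(t)) + y(t)(y(t)² − 2σx(t)) is monotone nondecreasing on ℝ. -/
/-- Fix `σ`.  If `u ≥ σ` everywhere and `x, y, z` solve the Heisenberg
system `x' = y`, `y' = u`, `z' = (1/2)xu` on `ℝ`, then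
`t ↦ 6σ(z − (1/6)xy) + y(y² − 2σx)` is monotone nondecreasing. -/
theorem stmt_13 (σ : ℝ) (u x y z : ℝ → ℝ)
    (hu : ∀ t, u t ≥ σ)
    (hx : ∀ t, HasDerivAt x (y t) t)
    (hy : ∀ t, HasDerivAt y (u t) t)
    (hz : ∀ t, HasDerivAt z ((1 / 2) * x t * u t) t) :
    Monotone (fun t =>
      6 * σ * (z t - (1 / 6) * x t * y t) + y t * ((y t) ^ 2 - 2 * σ * x t)) := by
  have hF : ∀ t, HasDerivAt (fun t =>
      6 * σ * (z t - (1 / 6) * x t * y t) + y t * ((y t) ^ 2 - 2 * σ * x t))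
      (3 * (u t - σ) * (y t) ^ 2) t := by
    intro t
    have h := ((((hz t).sub ((((hx t).const_mul ((1:ℝ)/6)).mul (hy t)))).const_mul
        (6 * σ)).add ((hy t).mul (((hy t).pow 2).sub ((hx t).const_mul (2 * σ)))))
    refine h.congr_deriv ?_
    simp only [Pi.pow_apply, Pi.sub_apply]
    push_cast
    ring
  have hdiff : Differentiable ℝ (fun t =>
      6 * σ * (z t - (1 / 6) * x t * y t) + y t * ((y t) ^ 2 - 2 * σ * x t)) :=
    fun t => (hF t).differentiableAt
  apply monotone_of_deriv_nonneg hdiff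
  intro t
  rw [(hF t).deriv]
  have h1 : u t - σ ≥ 0 := sub_nonneg.mpr (hu t)
  have h2 := sq_nonneg (y t)
  nlinarith
end

section
/- Fix real numbers ρ < 0 < ν. Let u : ℝ → [ρ, ν] and let x, y, z : ℝ → ℝ be differentiable functions satisfying, for all t ∈ ℝ, x'(t) = y(t), y'(t) = u(t), z'(t) = (1/2)x(t)u(t). If there exists S > 0 with (x(S), y(S), z(S)) = (x(0), y(0), z(0)), then x, y and z are constant on the interval [0, S]. -/
/-- Fix `ρ < 0 < ν`.  If `u` takes values in `[ρ, ν]` and `x, y, z` solve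
the Heisenberg system `x' = y`, `y' = u`, `z' = (1/2)xu` on `ℝ`, and the trajectory returns
at some time `S > 0` to its initial point, then `x`, `y`, `z` are constant on `[0, S]`. -/
theorem stmt_14 (ρ ν : ℝ) (hρ : ρ < 0) (hν : 0 < ν) (u x y z : ℝ → ℝ)
    (hu : ∀ t, u t ∈ Set.Icc ρ ν)
    (hx : ∀ t, HasDerivAt x (y t) t)
    (hy : ∀ t, HasDerivAt y (u t) t)
    (hz : ∀ t, HasDerivAt z ((1 / 2) * x t * u t) t)
    (S : ℝ) (hS : 0 < S)
    (hret : x S = x 0 ∧ y S = y 0 ∧ z S = z 0) :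
    ∀ t ∈ Set.Icc 0 S, x t = x 0 ∧ y t = y 0 ∧ z t = z 0 := by
  obtain ⟨hxS, hyS, hzS⟩ := hret
  set w : ℝ → ℝ := fun t => z t - x t * y t / 2 with hw_def
  have hw : ∀ t, HasDerivAt w (-(1 / 2) * (y t) ^ 2) t := by
    intro t
    have h := (hz t).sub (((hx t).mul (hy t)).div_const 2)
    refine h.congr_deriv ?_
    ring
  have hanti : Antitone w := by
    apply antitone_of_deriv_nonpos
    · intro t; exact (hw t).differentiableAt
    · intro t
      rw [(hw t).deriv]
      nlinarith [sq_nonneg (y t)]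
  have hwS : w S = w 0 := by simp only [hw_def, hxS, hyS, hzS]
  have hwconst : ∀ t ∈ Set.Icc 0 S, w t = w 0 := by
    intro t ht
    exact le_antisymm (hanti ht.1) (hwS ▸ hanti ht.2)
  -- y vanishes on [0, S]
  have hy0 : ∀ t ∈ Set.Icc 0 S, y t = 0 := by
    intro t ht
    have h1 : HasDerivWithinAt w (-(1 / 2) * (y t) ^ 2) (Set.Icc 0 S) t :=
      (hw t).hasDerivWithinAt
    have h2 : HasDerivWithinAt w 0 (Set.Icc 0 S) t := by
      refine (hasDerivWithinAt_const t _ (w 0)).congr ?_ (hwconst t ht)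
      intro s hs; exact hwconst s hs
    have hu' := (h1.derivWithin (uniqueDiffOn_Icc hS t ht)).symm.trans
      (h2.derivWithin (uniqueDiffOn_Icc hS t ht))
    have : (y t) ^ 2 = 0 := by linarith
    exact pow_eq_zero_iff (n := 2) (by norm_num) |>.mp this
  -- u vanishes on [0, S]
  have hu0 : ∀ t ∈ Set.Icc 0 S, u t = 0 := by
    intro t ht
    have h1 : HasDerivWithinAt y (u t) (Set.Icc 0 S) t := (hy t).hasDerivWithinAt
    have h2 : HasDerivWithinAt y 0 (Set.Icc 0 S) t := by
      refine (hasDerivWithinAt_const t _ (0 : ℝ)).congr ?_ (hy0 t ht)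
      intro s hs; exact hy0 s hs
    exact (h1.derivWithin (uniqueDiffOn_Icc hS t ht)).symm.trans
      (h2.derivWithin (uniqueDiffOn_Icc hS t ht))
  -- x constant
  have hxconst : ∀ t ∈ Set.Icc 0 S, x t = x 0 := by
    apply constant_of_has_deriv_right_zero
      (fun t _ => (hx t).continuousAt.continuousWithinAt)
    intro t ht
    have := (hx t).hasDerivWithinAt (s := Set.Ici t)
    rwa [hy0 t ⟨ht.1, ht.2.le⟩] at this
  -- z constant
  have hzconst : ∀ t ∈ Set.Icc 0 S, z t = z 0 := by
    apply constant_of_has_deriv_right_zero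
      (fun t _ => (hz t).continuousAt.continuousWithinAt)
    intro t ht
    have := (hz t).hasDerivWithinAt (s := Set.Ici t)
    rwa [hu0 t ⟨ht.1, ht.2.le⟩, mul_zero] at this
  intro t ht
  refine ⟨hxconst t ht, ?_, hzconst t ht⟩
  rw [hy0 t ht, hy0 0 ⟨le_refl 0, hS.le⟩]
end

section
/- Fix real numbers ρ < 0 < ν. For any two points P, Q ∈ ℝ³ there exist S > 0, a finite set T ⊂ [0, S], a function u : ℝ → ℝ with u(t) ∈ [ρ, ν] for all t which is constant on each connected component of [0, S] \ T (a piecewise constant admissible control), and a continuous curve γ : [0, S] → ℝ³ with γ(0) = P and γ(S) = Q, such that for every t ∈ [0, S] \ T the curve γ = (γ₁, γ₂, γ₃) is differentiable at t with γ₁'(t) = −γ₂(t), γ₂'(t) = γ₁(t) + u(t), γ₃'(t) = (1/2)γ₁(t)u(t). In other words, the system is controllable: every point of ℝ³ can be steered to every other point in finite time by an admissible control. -/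
open Real Set

namespace Stmt16

/-- Flow of the constant control `c` for time `t`. -/
noncomputable def Move (c t : ℝ) (p : ℝ × ℝ × ℝ) : ℝ × ℝ × ℝ :=
  ((p.1 + c) * Real.cos t - p.2.1 * Real.sin t - c,
   (p.1 + c) * Real.sin t + p.2.1 * Real.cos t,
   p.2.2 + (c/2) * (((p.1 + c) * Real.sin t + p.2.1 * Real.cos t) - p.2.1) - c^2 * t / 2)

def Reach (ρ ν : ℝ) (P Q : ℝ × ℝ × ℝ) : Prop :=
  ∃ S : ℝ, 0 < S ∧
    ∃ T : Finset ℝ, (T : Set ℝ) ⊆ Set.Icc 0 S ∧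
    ∃ u : ℝ → ℝ, (∀ t, u t ∈ Set.Icc ρ ν) ∧
      (∀ t₁ ∈ Set.Icc 0 S \ (T : Set ℝ), ∀ t₂ ∈ Set.Icc 0 S \ (T : Set ℝ),
        Set.uIcc t₁ t₂ ∩ (T : Set ℝ) = ∅ → u t₁ = u t₂) ∧
    ∃ γ : ℝ → ℝ × ℝ × ℝ,
      ContinuousOn γ (Set.Icc 0 S) ∧ γ 0 = P ∧ γ S = Q ∧
      ∀ t ∈ Set.Icc 0 S \ (T : Set ℝ),
        HasDerivWithinAt (fun s => (γ s).1) (-(γ t).2.1) (Set.Icc 0 S) t ∧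
        HasDerivWithinAt (fun s => (γ s).2.1) ((γ t).1 + u t) (Set.Icc 0 S) t ∧
        HasDerivWithinAt (fun s => (γ s).2.2) ((1 / 2) * (γ t).1 * u t) (Set.Icc 0 S) t

theorem reach_move {ρ ν : ℝ} {c : ℝ} (hc : c ∈ Set.Icc ρ ν) {t : ℝ} (ht : 0 < t)
    (p : ℝ × ℝ × ℝ) : Reach ρ ν p (Move c t p) := by
  obtain ⟨x, y, z⟩ := p
  refine ⟨t, ht, ∅, by simp, fun _ => c, fun _ => hc, by simp, fun s => Move c s (x, y, z),
    ?_, ?_, rfl, ?_⟩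
  · apply Continuous.continuousOn
    simp only [Move]
    fun_prop
  · simp [Move]
  · rintro s ⟨hs, -⟩
    have h2 : HasDerivAt (fun s => (x + c) * Real.sin s + y * Real.cos s)
        ((x + c) * Real.cos s - y * Real.sin s) s := by
      have := (((Real.hasDerivAt_sin s).const_mul (x + c)).add
          ((Real.hasDerivAt_cos s).const_mul y))
      exact this.congr_deriv (by ring)
    have h1 : HasDerivAt (fun s => (x + c) * Real.cos s - y * Real.sin s - c)
        (-((x + c) * Real.sin s + y * Real.cos s)) s := by
      have := ((((Real.hasDerivAt_cos s).const_mul (x + c)).sub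
          ((Real.hasDerivAt_sin s).const_mul y)).sub_const c)
      exact this.congr_deriv (by ring)
    have h3 : HasDerivAt (fun s => z + (c/2) * (((x + c) * Real.sin s + y * Real.cos s) - y)
        - c^2 * s / 2) ((1/2) * ((x + c) * Real.cos s - y * Real.sin s - c) * c) s := by
      have := (((h2.sub_const y).const_mul (c/2)).const_add z).sub
        ((hasDerivAt_id s).const_mul (c^2) |>.div_const 2)
      exact this.congr_deriv (by ring)
    refine ⟨?_, ?_, ?_⟩
    · simpa [Move] using h1.hasDerivWithinAt
    · simpa [Move] using h2.hasDerivWithinAt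
    · simpa [Move] using h3.hasDerivWithinAt

theorem reach_trans {ρ ν : ℝ} {P Q R : ℝ × ℝ × ℝ}
    (h1 : Reach ρ ν P Q) (h2 : Reach ρ ν Q R) : Reach ρ ν P R := by
  obtain ⟨S1, hS1, T1, hT1, u1, hu1, hc1, γ1, hγ1c, hγ10, hγ1S, hγ1d⟩ := h1
  obtain ⟨S2, hS2, T2, hT2, u2, hu2, hc2, γ2, hγ2c, hγ20, hγ2S, hγ2d⟩ := h2
  set S : ℝ := S1 + S2 with hSdef
  have hS1S : S1 ≤ S := by simp only [hSdef]; linarith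
  set T : Finset ℝ := (T1 ∪ T2.image (· + S1)) ∪ {S1} with hTdef
  set u : ℝ → ℝ := fun t => if t < S1 then u1 t else u2 (t - S1) with hudef
  set γ : ℝ → ℝ × ℝ × ℝ := fun t => if t < S1 then γ1 t else γ2 (t - S1) with hγdef
  have hmemT : ∀ t : ℝ, t ∈ (T : Set ℝ) ↔ t ∈ T1 ∨ t - S1 ∈ T2 ∨ t = S1 := by
    intro t
    simp only [hTdef, Finset.coe_union, Set.mem_union, Finset.coe_singleton,
      Set.mem_singleton_iff, Finset.mem_coe, Finset.mem_image]
    constructor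
    · rintro ((h | ⟨x, hx, rfl⟩) | h)
      · exact Or.inl h
      · exact Or.inr (Or.inl (by simpa using hx))
      · exact Or.inr (Or.inr h)
    · rintro (h | h | h)
      · exact Or.inl (Or.inl h)
      · exact Or.inl (Or.inr ⟨t - S1, h, by ring⟩)
      · exact Or.inr h
  have heq1 : ∀ t ∈ Set.Icc (0:ℝ) S1, γ t = γ1 t := by
    intro t ht
    by_cases h : t < S1
    · simp [hγdef, h]
    · have : t = S1 := le_antisymm ht.2 (not_lt.mp h)
      simp [hγdef, this, hγ20, hγ1S]
  have heq2 : ∀ t ∈ Set.Icc S1 S, γ t = γ2 (t - S1) := by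
    intro t ht
    by_cases h : t < S1
    · exact absurd ht.1 (not_le.mpr h)
    · simp [hγdef, h]
  have hcont1 : ContinuousOn γ (Set.Icc 0 S1) := hγ1c.congr heq1
  have hcont2 : ContinuousOn γ (Set.Icc S1 S) := by
    refine ContinuousOn.congr ?_ heq2
    refine hγ2c.comp ((continuous_id.sub continuous_const).continuousOn) ?_
    intro x hx
    constructor <;> simp only [hSdef] at hx ⊢
    · linarith [hx.1]
    · linarith [hx.2]
  refine ⟨S, by simp only [hSdef]; linarith, T, ?_, u, ?_, ?_, γ, ?_, ?_, ?_, ?_⟩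
  · -- T ⊆ Icc 0 S
    intro t ht
    rw [hmemT] at ht
    rcases ht with h | h | rfl
    · have := hT1 h; exact ⟨this.1, this.2.trans hS1S⟩
    · have := hT2 h
      have h1 := this.1
      have h2 := this.2
      rw [Set.mem_Icc]
      rw [hSdef]
      constructor <;> linarith
    · exact ⟨hS1.le, hS1S⟩
  · -- u values
    intro t
    by_cases h : t < S1
    · simpa [hudef, h] using hu1 t
    · simpa [hudef, h] using hu2 (t - S1)
  · -- constancy
    intro t₁ ht₁ t₂ ht₂ hint
    have hS1T : S1 ∈ (T : Set ℝ) := (hmemT S1).mpr (Or.inr (Or.inr rfl))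
    have hnS1 : S1 ∉ Set.uIcc t₁ t₂ := by
      intro h
      have : S1 ∈ Set.uIcc t₁ t₂ ∩ (T : Set ℝ) := ⟨h, hS1T⟩
      rw [hint] at this
      exact this
    have ht₁ne : t₁ ≠ S1 := fun h => hnS1 (h ▸ Set.left_mem_uIcc)
    have ht₂ne : t₂ ≠ S1 := fun h => hnS1 (h ▸ Set.right_mem_uIcc)
    have hcases : (t₁ < S1 ∧ t₂ < S1) ∨ (S1 < t₁ ∧ S1 < t₂) := by
      rcases lt_or_gt_of_ne ht₁ne with h1 | h1 <;> rcases lt_or_gt_of_ne ht₂ne with h2 | h2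
      · exact Or.inl ⟨h1, h2⟩
      · exact absurd (Set.mem_uIcc.mpr (Or.inl ⟨h1.le, h2.le⟩)) hnS1
      · exact absurd (Set.mem_uIcc.mpr (Or.inr ⟨h2.le, h1.le⟩)) hnS1
      · exact Or.inr ⟨h1, h2⟩
    have hsubT1 : (T1 : Set ℝ) ⊆ (T : Set ℝ) := by
      intro x hx; exact (hmemT x).mpr (Or.inl hx)
    rcases hcases with ⟨h1, h2⟩ | ⟨h1, h2⟩
    · have e1 : u t₁ = u1 t₁ := by simp [hudef, h1]
      have e2 : u t₂ = u1 t₂ := by simp [hudef, h2]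
      rw [e1, e2]
      refine hc1 t₁ ⟨⟨ht₁.1.1, h1.le⟩, fun h => ht₁.2 (hsubT1 h)⟩
        t₂ ⟨⟨ht₂.1.1, h2.le⟩, fun h => ht₂.2 (hsubT1 h)⟩ ?_
      rw [Set.eq_empty_iff_forall_notMem]
      rintro x ⟨hx1, hx2⟩
      have : x ∈ Set.uIcc t₁ t₂ ∩ (T : Set ℝ) := ⟨hx1, hsubT1 hx2⟩
      rw [hint] at this; exact this
    · have e1 : u t₁ = u2 (t₁ - S1) := by simp [hudef, not_lt.mpr h1.le, asymm h1]
      have e2 : u t₂ = u2 (t₂ - S1) := by simp [hudef, not_lt.mpr h2.le, asymm h2]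
      rw [e1, e2]
      have m1 : t₁ - S1 ∈ Set.Icc 0 S2 \ (T2 : Set ℝ) := by
        refine ⟨⟨by linarith, by have := ht₁.1.2; simp only [hSdef] at this; linarith⟩, fun h => ?_⟩
        exact ht₁.2 ((hmemT t₁).mpr (Or.inr (Or.inl h)))
      have m2 : t₂ - S1 ∈ Set.Icc 0 S2 \ (T2 : Set ℝ) := by
        refine ⟨⟨by linarith, by have := ht₂.1.2; simp only [hSdef] at this; linarith⟩, fun h => ?_⟩
        exact ht₂.2 ((hmemT t₂).mpr (Or.inr (Or.inl h)))
      refine hc2 _ m1 _ m2 ?_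
      rw [Set.eq_empty_iff_forall_notMem]
      rintro x ⟨hx1, hx2⟩
      have hx1' : x + S1 ∈ Set.uIcc t₁ t₂ := by
        rw [Set.mem_uIcc] at hx1 ⊢
        rcases hx1 with ⟨a, b⟩ | ⟨a, b⟩
        · exact Or.inl ⟨by linarith, by linarith⟩
        · exact Or.inr ⟨by linarith, by linarith⟩
      have : x + S1 ∈ Set.uIcc t₁ t₂ ∩ (T : Set ℝ) :=
        ⟨hx1', (hmemT _).mpr (Or.inr (Or.inl (by simpa using hx2)))⟩
      rw [hint] at this; exact this
  · -- continuity
    rw [← Set.Icc_union_Icc_eq_Icc hS1.le hS1S]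
    intro t ht
    have c1 : ContinuousWithinAt γ (Set.Icc 0 S1) t := by
      by_cases h : t ∈ Set.Icc (0:ℝ) S1
      · exact hcont1 t h
      · exact continuousWithinAt_of_notMem_closure (by rwa [isClosed_Icc.closure_eq])
    have c2 : ContinuousWithinAt γ (Set.Icc S1 S) t := by
      by_cases h : t ∈ Set.Icc S1 S
      · exact hcont2 t h
      · exact continuousWithinAt_of_notMem_closure (by rwa [isClosed_Icc.closure_eq])
    exact c1.union c2
  · -- γ 0 = P
    rw [heq1 0 ⟨le_refl 0, hS1.le⟩, hγ10]
  · -- γ S = R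
    rw [heq2 S ⟨hS1S, le_refl S⟩]
    have : S - S1 = S2 := by simp only [hSdef]; ring
    rw [this, hγ2S]
  · -- derivatives
    intro t ⟨htI, htT⟩
    have htne : t ≠ S1 := fun h => htT ((hmemT t).mpr (Or.inr (Or.inr h)))
    rcases lt_or_gt_of_ne htne with hlt | hgt
    · -- t < S1
      have htmem : t ∈ Set.Icc 0 S1 \ (T1 : Set ℝ) :=
        ⟨⟨htI.1, hlt.le⟩, fun h => htT ((hmemT t).mpr (Or.inl h))⟩
      have hd := hγ1d t htmem
      have hmem : Set.Icc (0:ℝ) S1 ∈ nhdsWithin t (Set.Icc 0 S) := by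
        refine mem_nhdsWithin.2 ⟨Set.Iio S1, isOpen_Iio, hlt, ?_⟩
        rintro x ⟨hx1, hx2⟩
        exact ⟨hx2.1, le_of_lt hx1⟩
      have hγt : γ t = γ1 t := heq1 t htmem.1
      have hut : u t = u1 t := by simp [hudef, hlt]
      rw [hγt, hut]
      have hcg : ∀ (f : (ℝ × ℝ × ℝ) → ℝ) (v : ℝ),
          HasDerivWithinAt (fun s => f (γ1 s)) v (Set.Icc 0 S1) t →
          HasDerivWithinAt (fun s => f (γ s)) v (Set.Icc 0 S) t := by
        intro f v hv
        refine (hv.congr (fun x hx => by rw [heq1 x hx]) (by rw [hγt])).mono_of_mem_nhdsWithin hmem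
      exact ⟨hcg (fun p => p.1) _ hd.1, hcg (fun p => p.2.1) _ hd.2.1,
        hcg (fun p => p.2.2) _ hd.2.2⟩
    · -- t > S1
      have htmem : t - S1 ∈ Set.Icc 0 S2 \ (T2 : Set ℝ) := by
        refine ⟨⟨by linarith, by have := htI.2; simp only [hSdef] at this; linarith⟩, fun h => ?_⟩
        exact htT ((hmemT t).mpr (Or.inr (Or.inl h)))
      have hd := hγ2d (t - S1) htmem
      have hmem : Set.Icc S1 S ∈ nhdsWithin t (Set.Icc 0 S) := by
        refine mem_nhdsWithin.2 ⟨Set.Ioi S1, isOpen_Ioi, hgt, ?_⟩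
        rintro x ⟨hx1, hx2⟩
        exact ⟨le_of_lt hx1, hx2.2⟩
      have htIcc : t ∈ Set.Icc S1 S := ⟨hgt.le, htI.2⟩
      have hγt : γ t = γ2 (t - S1) := heq2 t htIcc
      have hut : u t = u2 (t - S1) := by simp [hudef, not_lt.mpr hgt.le, asymm hgt]
      rw [hγt, hut]
      have hshift : HasDerivWithinAt (fun s : ℝ => s - S1) 1 (Set.Icc S1 S) t :=
        ((hasDerivAt_id t).sub_const S1).hasDerivWithinAt
      have hmaps : Set.MapsTo (fun s : ℝ => s - S1) (Set.Icc S1 S) (Set.Icc 0 S2) := by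
        rintro x ⟨hx1, hx2⟩
        rw [hSdef] at hx2
        show x - S1 ∈ Set.Icc 0 S2
        rw [Set.mem_Icc]
        constructor <;> linarith
      have hcg : ∀ (f : (ℝ × ℝ × ℝ) → ℝ) (v : ℝ),
          HasDerivWithinAt (fun s => f (γ2 s)) v (Set.Icc 0 S2) (t - S1) →
          HasDerivWithinAt (fun s => f (γ s)) v (Set.Icc 0 S) t := by
        intro f v hv
        have := HasDerivWithinAt.comp t hv hshift hmaps
        rw [mul_one] at this
        refine (HasDerivWithinAt.congr this (fun x hx => by simp [heq2 x hx, Function.comp])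
          (by simp [hγt, Function.comp])).mono_of_mem_nhdsWithin hmem
      exact ⟨hcg (fun p => p.1) _ hd.1, hcg (fun p => p.2.1) _ hd.2.1,
        hcg (fun p => p.2.2) _ hd.2.2⟩


lemma triple_eq {a a' b b' c c' : ℝ} (h1 : a = a') (h2 : b = b') (h3 : c = c') :
    ((a, b, c) : ℝ × ℝ × ℝ) = (a', b', c') := by rw [h1, h2, h3]

lemma move_rot (t x y z : ℝ) :
    Move 0 t (x, y, z) = (x * Real.cos t - y * Real.sin t, x * Real.sin t + y * Real.cos t, z) := by
  simp [Move]

lemma move_pi (c x y z : ℝ) :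
    Move c π (x, y, z) = (-x - 2*c, -y, z - c*y - c^2*π/2) := by
  simp [Move, Real.cos_pi, Real.sin_pi]
  constructor <;> ring

lemma move_two_pi (c x y z : ℝ) :
    Move c (2*π) (x, y, z) = (x, y, z - π*c^2) := by
  simp [Move, Real.cos_two_pi, Real.sin_two_pi]
  ring

section Steering

variable {ρ ν : ℝ} (hρ : ρ < 0) (hν : 0 < ν)

include hρ hν

lemma zero_mem : (0:ℝ) ∈ Set.Icc ρ ν := ⟨hρ.le, hν.le⟩

lemma reach_refl (p : ℝ × ℝ × ℝ) : Reach ρ ν p p := by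
  obtain ⟨x, y, z⟩ := p
  have := reach_move (zero_mem hρ hν) (by positivity : (0:ℝ) < 2*π) (x, y, z)
  rwa [move_two_pi, show z - π*0^2 = z by ring] at this

lemma reach_rot {t : ℝ} (ht : 0 < t) (x y z : ℝ) :
    Reach ρ ν (x, y, z) (x * Real.cos t - y * Real.sin t, x * Real.sin t + y * Real.cos t, z) := by
  have := reach_move (zero_mem hρ hν) ht (x, y, z)
  rwa [move_rot] at this

lemma reach_down_n : ∀ (n : ℕ) (d x y z : ℝ), 0 ≤ d → d ≤ n * (π * ν^2) →
    Reach ρ ν (x, y, z) (x, y, z - d) := by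
  intro n
  induction n with
  | zero =>
    intro d x y z hd hd'
    have : d = 0 := le_antisymm (by simpa using hd') hd
    rw [this, sub_zero]
    exact reach_refl hρ hν _
  | succ n ih =>
    intro d x y z hd hd'
    by_cases h : d ≤ π * ν^2
    · set c := Real.sqrt (d / π) with hc
      have hc0 : 0 ≤ c := Real.sqrt_nonneg _
      have hcν : c ≤ ν := by
        rw [hc, show ν = Real.sqrt (ν^2) from (Real.sqrt_sq hν.le).symm]
        apply Real.sqrt_le_sqrt
        rw [div_le_iff₀ Real.pi_pos]
        linarith [h]
      have hcsq : π * c^2 = d := by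
        rw [hc, Real.sq_sqrt (by positivity)]
        field_simp
      have := reach_move (⟨hρ.le.trans hc0, hcν⟩ : c ∈ Set.Icc ρ ν)
        (by positivity : (0:ℝ) < 2*π) (x, y, z)
      rwa [move_two_pi, hcsq] at this
    · push_neg at h
      have h1 := reach_move (⟨by linarith, le_refl ν⟩ : ν ∈ Set.Icc ρ ν)
        (by positivity : (0:ℝ) < 2*π) (x, y, z)
      rw [move_two_pi] at h1
      have h2 := ih (d - π * ν^2) x y (z - π * ν^2) (by linarith) (by push_cast at hd' ⊢; linarith)
      have := reach_trans h1 h2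
      rwa [show z - π*ν^2 - (d - π*ν^2) = z - d by ring] at this

lemma reach_down {d : ℝ} (hd : 0 ≤ d) (x y z : ℝ) :
    Reach ρ ν (x, y, z) (x, y, z - d) := by
  obtain ⟨n, hn⟩ := exists_nat_ge (d / (π * ν^2))
  refine reach_down_n hρ hν n d x y z hd ?_
  rw [div_le_iff₀ (by positivity)] at hn
  linarith

lemma reach_pair {s : ℝ} (hs : |s| ≤ ν - ρ) :
    ∃ δ : ℝ, ∀ x z : ℝ, Reach ρ ν (x, 0, z) (x + 2*s, 0, z + δ) := by
  set c₁ := ρ + max s 0 with hc₁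
  set c₂ := ρ + max (-s) 0 with hc₂
  have habs := abs_le.mp hs
  have hc₁m : c₁ ∈ Set.Icc ρ ν := by
    constructor
    · simp [hc₁, le_max_right]
    · rw [hc₁]
      rcases le_or_gt s 0 with h | h
      · rw [max_eq_right h]; linarith
      · rw [max_eq_left h.le]; linarith [habs.2]
  have hc₂m : c₂ ∈ Set.Icc ρ ν := by
    constructor
    · simp [hc₂, le_max_right]
    · rw [hc₂]
      rcases le_or_gt (-s) 0 with h | h
      · rw [max_eq_right h]; linarith
      · rw [max_eq_left h.le]; linarith [habs.1]
  have hdiff : c₁ - c₂ = s := by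
    rw [hc₁, hc₂]
    rcases le_or_gt s 0 with h | h
    · rw [max_eq_right h, max_eq_left (by linarith : (0:ℝ) ≤ -s)]; ring
    · rw [max_eq_left h.le, max_eq_right (by linarith : -s ≤ (0:ℝ))]; ring
  refine ⟨-(c₁^2*π/2) - c₂^2*π/2, fun x z => ?_⟩
  have h1 := reach_move hc₁m Real.pi_pos (x, 0, z)
  rw [move_pi] at h1
  have h2 := reach_move hc₂m Real.pi_pos (-x - 2*c₁, -0, z - c₁*0 - c₁^2*π/2)
  rw [move_pi] at h2
  have := reach_trans h1 h2
  rwa [show -(-x - 2*c₁) - 2*c₂ = x + 2*s by rw [← hdiff]; ring, neg_neg, neg_zero,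
    show z - c₁*0 - c₁^2*π/2 - c₂*0 - c₂^2*π/2 = z + (-(c₁^2*π/2) - c₂^2*π/2) by ring] at this

lemma reach_transl_n : ∀ (n : ℕ) (d : ℝ), |d| ≤ n * (2*(ν-ρ)) →
    ∃ δ : ℝ, ∀ x z : ℝ, Reach ρ ν (x, 0, z) (x + d, 0, z + δ) := by
  intro n
  induction n with
  | zero =>
    intro d hd
    have : d = 0 := by
      have := abs_nonneg d
      have hd0 : |d| = 0 := le_antisymm (by simpa using hd) this
      exact abs_eq_zero.mp hd0
    refine ⟨0, fun x z => ?_⟩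
    rw [this, add_zero, add_zero]
    exact reach_refl hρ hν _
  | succ n ih =>
    intro d hd
    by_cases h : |d| ≤ 2*(ν-ρ)
    · obtain ⟨δ, hδ⟩ := reach_pair hρ hν (s := d/2)
        (by rw [abs_div]; rw [abs_of_pos (by norm_num : (0:ℝ) < 2)]; linarith)
      refine ⟨δ, fun x z => ?_⟩
      have := hδ x z
      rwa [show x + 2*(d/2) = x + d by ring] at this
    · push_neg at h
      have hνρ : 0 < ν - ρ := by linarith
      set s : ℝ := if 0 ≤ d then ν - ρ else -(ν - ρ) with hsdef
      have hs : |s| ≤ ν - ρ := by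
        rw [hsdef]
        split
        · rw [abs_of_pos hνρ]
        · rw [abs_neg, abs_of_pos hνρ]
      obtain ⟨δ₁, hδ₁⟩ := reach_pair hρ hν hs
      have hd' : |d - 2*s| ≤ n * (2*(ν-ρ)) := by
        rw [hsdef]
        push_cast at hd
        rcases abs_le.mp hd with ⟨hdl, hdr⟩
        rcases le_or_gt 0 d with hd0 | hd0
        · rw [if_pos hd0, abs_le]
          rw [abs_of_nonneg hd0] at h
          constructor <;> linarith
        · rw [if_neg (not_le.mpr hd0), abs_le]
          rw [abs_of_neg hd0] at h
          constructor <;> linarith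
      obtain ⟨δ₂, hδ₂⟩ := ih (d - 2*s) hd'
      refine ⟨δ₁ + δ₂, fun x z => ?_⟩
      have := reach_trans (hδ₁ x z) (hδ₂ (x + 2*s) (z + δ₁))
      rwa [show x + 2*s + (d - 2*s) = x + d by ring, add_assoc] at this

lemma reach_transl (d : ℝ) :
    ∃ δ : ℝ, ∀ x z : ℝ, Reach ρ ν (x, 0, z) (x + d, 0, z + δ) := by
  have hνρ : 0 < 2*(ν - ρ) := by linarith
  obtain ⟨n, hn⟩ := exists_nat_ge (|d| / (2*(ν-ρ)))
  refine reach_transl_n hρ hν n d ?_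
  rw [div_le_iff₀ hνρ] at hn
  linarith

lemma reach_uploop :
    ∃ r : ℝ, 0 < r ∧ ∃ Δ : ℝ, 1 ≤ Δ ∧ ∀ z : ℝ, Reach ρ ν (0, -r, z) (0, -r, z + Δ) := by
  have hπ := Real.pi_pos
  have hνρ : 0 < ν - ρ := by linarith
  set r : ℝ := (1 + π * (ν^2 + ρ^2)) / (ν - ρ) with hrdef
  have hr : 0 < r := by
    apply div_pos _ hνρ
    positivity
  have hrmul : (ν - ρ) * r = 1 + π * (ν^2 + ρ^2) := by
    rw [hrdef]; field_simp
  clear_value r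
  set R₁ := Real.sqrt (ν^2 + r^2) with hR₁
  set R₂ := Real.sqrt (ρ^2 + r^2) with hR₂
  have hR₁pos : 0 < R₁ := Real.sqrt_pos.mpr (by positivity)
  have hR₂pos : 0 < R₂ := Real.sqrt_pos.mpr (by positivity)
  have hR₁sq : R₁^2 = ν^2 + r^2 := Real.sq_sqrt (by positivity)
  have hR₂sq : R₂^2 = ρ^2 + r^2 := Real.sq_sqrt (by positivity)
  have hνR₁ : ν < R₁ := by
    rw [show ν = Real.sqrt (ν^2) from (Real.sqrt_sq hν.le).symm, hR₁]
    exact Real.sqrt_lt_sqrt (by positivity) (by nlinarith)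
  have hρR₂ : -R₂ < ρ := by
    have h : -ρ < R₂ := by
      rw [show -ρ = Real.sqrt ((-ρ)^2) from (Real.sqrt_sq (by linarith)).symm, hR₂]
      exact Real.sqrt_lt_sqrt (by positivity) (by nlinarith)
    linarith
  clear_value R₁ R₂
  have hb₁ : -1 ≤ ν / R₁ := le_trans (by norm_num : (-1:ℝ) ≤ 0) (by positivity)
  have hb₁' : ν / R₁ ≤ 1 := by rw [div_le_one hR₁pos]; linarith
  have hb₂ : -1 ≤ ρ / R₂ := by
    rw [le_div_iff₀ hR₂pos]
    nlinarith
  have hb₂' : ρ / R₂ ≤ 1 := by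
    rw [div_le_one hR₂pos]
    linarith
  set α := Real.arccos (ν / R₁) with hα
  set β := Real.arccos (ρ / R₂) with hβ
  have hα0 : 0 < α := Real.arccos_pos.mpr (by rw [div_lt_one hR₁pos]; exact hνR₁)
  have hαπ : α ≤ π := Real.arccos_le_pi _
  have hβ0 : 0 ≤ β := Real.arccos_nonneg _
  have hβπ : β ≤ π := Real.arccos_le_pi _
  have hβlt : β < π := by
    refine lt_of_le_of_ne hβπ (fun h => ?_)
    have h2 := Real.arccos_eq_pi.mp h
    rw [div_le_iff₀ hR₂pos] at h2
    nlinarith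
  have hcosα : Real.cos α = ν / R₁ := Real.cos_arccos hb₁ hb₁'
  have hcosβ : Real.cos β = ρ / R₂ := Real.cos_arccos hb₂ hb₂'
  have hsinα : Real.sin α = r / R₁ := by
    rw [hα, Real.sin_arccos, show 1 - (ν/R₁)^2 = (r/R₁)^2 by
      field_simp
      linear_combination hR₁sq]
    exact Real.sqrt_sq (by positivity)
  have hsinβ : Real.sin β = r / R₂ := by
    rw [hβ, Real.sin_arccos, show 1 - (ρ/R₂)^2 = (r/R₂)^2 by
      field_simp
      linear_combination hR₂sq]
    exact Real.sqrt_sq (by positivity)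
  clear_value α β
  set t₁ : ℝ := 2*α with ht₁def
  set t₂ : ℝ := 2*(π - β) with ht₂def
  have ht₁ : 0 < t₁ := by rw [ht₁def]; linarith
  have ht₂ : 0 < t₂ := by rw [ht₂def]; linarith
  have hcost₁ : Real.cos t₁ = 2*(ν/R₁)^2 - 1 := by
    rw [ht₁def, Real.cos_two_mul, hcosα]
  have hsint₁ : Real.sin t₁ = 2*(r/R₁)*(ν/R₁) := by
    rw [ht₁def, Real.sin_two_mul, hsinα, hcosα]
  have hcost₂ : Real.cos t₂ = 2*(ρ/R₂)^2 - 1 := by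
    rw [ht₂def, show 2*(π-β) = 2*π - 2*β by ring, Real.cos_sub, Real.cos_two_pi,
      Real.sin_two_pi, Real.cos_two_mul, hcosβ]
    ring
  have hsint₂ : Real.sin t₂ = -(2*(r/R₂)*(ρ/R₂)) := by
    rw [ht₂def, show 2*(π-β) = 2*π - 2*β by ring, Real.sin_sub, Real.sin_two_pi,
      Real.cos_two_pi, Real.sin_two_mul, hsinβ, hcosβ]
    ring
  clear_value t₁ t₂
  set Δ : ℝ := (ν-ρ)*r - ν^2*α - ρ^2*(π-β) with hΔdef
  clear_value Δ
  have hΔ : 1 ≤ Δ := by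
    have h1 : ν^2*α ≤ ν^2*π := mul_le_mul_of_nonneg_left hαπ (sq_nonneg ν)
    have h2 : ρ^2*(π-β) ≤ ρ^2*π := mul_le_mul_of_nonneg_left (by linarith) (sq_nonneg ρ)
    rw [hΔdef]
    linarith [hrmul, h1, h2]
  have em1 : ∀ z, Move ν t₁ (0, -r, z) = (0, r, z + (ν*r - ν^2*α)) := by
    intro z
    simp only [Move]
    refine triple_eq ?_ ?_ ?_
    · rw [hcost₁, hsint₁]
      field_simp
      linear_combination (-(2*ν)) * hR₁sq
    · rw [hcost₁, hsint₁]
      field_simp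
      ring
    · rw [hcost₁, hsint₁, ht₁def]
      field_simp
      ring
  have em2 : ∀ w, Move ρ t₂ (0, r, w) = (0, -r, w + (-(ρ*r) - ρ^2*(π-β))) := by
    intro w
    simp only [Move]
    refine triple_eq ?_ ?_ ?_
    · rw [hcost₂, hsint₂]
      field_simp
      linear_combination (-(2*ρ)) * hR₂sq
    · rw [hcost₂, hsint₂]
      field_simp
      ring
    · rw [hcost₂, hsint₂, ht₂def]
      field_simp
      ring
  refine ⟨r, hr, Δ, hΔ, fun z => ?_⟩
  have h1 := reach_move (⟨by linarith, le_refl ν⟩ : ν ∈ Set.Icc ρ ν) ht₁ (0, -r, z)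
  rw [em1] at h1
  have h2 := reach_move (⟨le_refl ρ, by linarith⟩ : ρ ∈ Set.Icc ρ ν) ht₂
    (0, r, z + (ν*r - ν^2*α))
  rw [em2] at h2
  have := reach_trans h1 h2
  rwa [show z + (ν*r - ν^2*α) + (-(ρ*r) - ρ^2*(π-β)) = z + Δ by rw [hΔdef]; ring] at this

lemma reach_to_axis (x y z : ℝ) :
    Reach ρ ν (x, y, z) (‖(⟨x, y⟩ : ℂ)‖, 0, z) := by
  have hπ := Real.pi_pos
  set m : ℝ := ‖(⟨x, y⟩ : ℂ)‖ with hm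
  set θ : ℝ := Complex.arg ⟨x, y⟩ with hθ
  have hx : m * Real.cos θ = x := Complex.norm_mul_cos_arg ⟨x, y⟩
  have hy : m * Real.sin θ = y := Complex.norm_mul_sin_arg ⟨x, y⟩
  have hθπ : θ ≤ π := Complex.arg_le_pi _
  have ht : 0 < 2*π - θ := by linarith
  have hrot := reach_rot hρ hν ht x y z
  have hc : Real.cos (2*π - θ) = Real.cos θ := by
    rw [Real.cos_sub, Real.cos_two_pi, Real.sin_two_pi]; ring
  have hs : Real.sin (2*π - θ) = -Real.sin θ := by
    rw [Real.sin_sub, Real.cos_two_pi, Real.sin_two_pi]; ring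
  rw [hc, hs,
    show x * Real.cos θ - y * -Real.sin θ = m by
      linear_combination (-(Real.cos θ)) * hx + (-(Real.sin θ)) * hy +
        m * (Real.sin_sq_add_cos_sq θ),
    show x * -Real.sin θ + y * Real.cos θ = 0 by
      linear_combination (Real.sin θ) * hx + (-(Real.cos θ)) * hy] at hrot
  exact hrot

lemma reach_from_axis (x y z : ℝ) :
    Reach ρ ν (‖(⟨x, y⟩ : ℂ)‖, 0, z) (x, y, z) := by
  have hπ := Real.pi_pos
  set m : ℝ := ‖(⟨x, y⟩ : ℂ)‖ with hm
  set θ : ℝ := Complex.arg ⟨x, y⟩ with hθ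
  have hx : m * Real.cos θ = x := Complex.norm_mul_cos_arg ⟨x, y⟩
  have hy : m * Real.sin θ = y := Complex.norm_mul_sin_arg ⟨x, y⟩
  have hθπ : -π < θ := Complex.neg_pi_lt_arg _
  have ht : 0 < θ + 2*π := by linarith
  have hrot := reach_rot hρ hν ht m 0 z
  have hc : Real.cos (θ + 2*π) = Real.cos θ := Real.cos_add_two_pi θ
  have hs : Real.sin (θ + 2*π) = Real.sin θ := Real.sin_add_two_pi θ
  rw [hc, hs, show m * Real.cos θ - 0 * Real.sin θ = m * Real.cos θ by ring,
    show m * Real.sin θ + 0 * Real.cos θ = m * Real.sin θ by ring, hx, hy] at hrot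
  exact hrot

lemma reach_half_axis (a z : ℝ) : Reach ρ ν (a, 0, z) (-a, 0, z) := by
  have h := reach_rot hρ hν Real.pi_pos a 0 z
  rwa [Real.cos_pi, Real.sin_pi, show a * (-1) - 0 * 0 = -a by ring,
    show a * 0 + 0 * (-1) = (0:ℝ) by ring] at h

lemma reach_quarter₁ (a z : ℝ) : Reach ρ ν (-a, 0, z) (0, -a, z) := by
  have h := reach_rot hρ hν Real.pi_div_two_pos (-a) 0 z
  rwa [Real.cos_pi_div_two, Real.sin_pi_div_two, show -a * 0 - 0 * 1 = (0:ℝ) by ring,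
    show -a * 1 + 0 * 0 = -a by ring] at h

lemma reach_quarter₂ (a z : ℝ) : Reach ρ ν (0, -a, z) (a, 0, z) := by
  have h := reach_rot hρ hν Real.pi_div_two_pos 0 (-a) z
  rwa [Real.cos_pi_div_two, Real.sin_pi_div_two, show 0 * 0 - -a * 1 = a by ring,
    show 0 * 1 + -a * 0 = (0:ℝ) by ring] at h

lemma reach_all (P Q : ℝ × ℝ × ℝ) : Reach ρ ν P Q := by
  obtain ⟨p₁, p₂, p₃⟩ := P
  obtain ⟨q₁, q₂, q₃⟩ := Q
  obtain ⟨r, hr, Δ, hΔ, hloop⟩ := reach_uploop hρ hν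
  set mP : ℝ := ‖(⟨p₁, p₂⟩ : ℂ)‖ with hmP
  set mQ : ℝ := ‖(⟨q₁, q₂⟩ : ℂ)‖ with hmQ
  obtain ⟨δ₁, hδ₁⟩ := reach_transl hρ hν (r - mP)
  obtain ⟨δ₂, hδ₂⟩ := reach_transl hρ hν (mQ - r)
  set w : ℝ := p₃ + δ₁ with hw
  -- head: P → (0, -r, w)
  have head : Reach ρ ν (p₁, p₂, p₃) (0, -r, w) := by
    have h1 := reach_to_axis hρ hν p₁ p₂ p₃
    have h2 := hδ₁ mP p₃
    rw [show mP + (r - mP) = r by ring] at h2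
    exact reach_trans (reach_trans (reach_trans h1 h2) (reach_half_axis hρ hν r w))
      (reach_quarter₁ hρ hν r w)
  -- loops
  have loops : ∀ n : ℕ, Reach ρ ν (0, -r, w) (0, -r, w + n * Δ) := by
    intro n
    induction n with
    | zero => simpa using reach_refl hρ hν (0, -r, w)
    | succ n ih =>
      have := reach_trans ih (hloop (w + n * Δ))
      rwa [show w + ↑n * Δ + Δ = w + ↑(n+1) * Δ by push_cast; ring] at this
  -- tail: (0, -r, z) → (q₁, q₂, z + δ₂)
  have tail : ∀ z : ℝ, Reach ρ ν (0, -r, z) (q₁, q₂, z + δ₂) := by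
    intro z
    have t1 := reach_quarter₂ hρ hν r z
    have t2 := hδ₂ r z
    rw [show r + (mQ - r) = mQ by ring] at t2
    exact reach_trans (reach_trans t1 t2) (reach_from_axis hρ hν q₁ q₂ (z + δ₂))
  obtain ⟨n, hn⟩ := exists_nat_ge (q₃ - w - δ₂)
  have hnΔ : (n : ℝ) ≤ n * Δ := by
    calc (n : ℝ) = n * 1 := by ring
    _ ≤ n * Δ := mul_le_mul_of_nonneg_left hΔ (Nat.cast_nonneg n)
  have hd : 0 ≤ w + n * Δ + δ₂ - q₃ := by linarith
  have down := reach_down hρ hν hd q₁ q₂ (w + n * Δ + δ₂)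
  rw [show w + ↑n * Δ + δ₂ - (w + ↑n * Δ + δ₂ - q₃) = q₃ by ring] at down
  exact reach_trans (reach_trans (reach_trans head (loops n)) (tail (w + n * Δ))) down

end Steering

end Stmt16




/-- Fix `ρ < 0 < ν`.  The system `ẋ = −y`, `ẏ = x + u`, `ż = (1/2)xu`
with piecewise constant controls taking values in `[ρ, ν]` is controllable on `ℝ³`:
for any two points `P, Q` there are a time `S > 0`, a finite set `T ⊆ [0, S]`, an admissible
control `u` (constant on each connected component of `[0, S] \ T`) and a continuous curve
`γ : [0, S] → ℝ³` solving the system for the control `u` outside `T`, with `γ 0 = P` and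
`γ S = Q`. -/
theorem stmt_16 (ρ ν : ℝ) (hρ : ρ < 0) (hν : 0 < ν) (P Q : ℝ × ℝ × ℝ) :
    ∃ S : ℝ, 0 < S ∧
    ∃ T : Finset ℝ, (T : Set ℝ) ⊆ Set.Icc 0 S ∧
    ∃ u : ℝ → ℝ, (∀ t, u t ∈ Set.Icc ρ ν) ∧
      (∀ t₁ ∈ Set.Icc 0 S \ (T : Set ℝ), ∀ t₂ ∈ Set.Icc 0 S \ (T : Set ℝ),
        Set.uIcc t₁ t₂ ∩ (T : Set ℝ) = ∅ → u t₁ = u t₂) ∧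
    ∃ γ : ℝ → ℝ × ℝ × ℝ,
      ContinuousOn γ (Set.Icc 0 S) ∧ γ 0 = P ∧ γ S = Q ∧
      ∀ t ∈ Set.Icc 0 S \ (T : Set ℝ),
        HasDerivWithinAt (fun s => (γ s).1) (-(γ t).2.1) (Set.Icc 0 S) t ∧
        HasDerivWithinAt (fun s => (γ s).2.1) ((γ t).1 + u t) (Set.Icc 0 S) t ∧
        HasDerivWithinAt (fun s => (γ s).2.2) ((1 / 2) * (γ t).1 * u t) (Set.Icc 0 S) t :=
  Stmt16.reach_all hρ hν P Q
end
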